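/- For every odd integer d ≥ 3, the set U_d^odd = (⋃_{k=0}^{(d−3)/2} C^{(d,d−2k)}) ∪ {S_d} is an unextendible product basis in ℂ^(Fin d × Fin d × Fin d): if u, v, w ∈ ℂ^d are such that the product vector u ⊗ v ⊗ w is orthogonal to every member of U_d^odd, then u ⊗ v ⊗ w = 0 (equivalently, u = 0 or v = 0 or w = 0). -/

import Mathlib

open scoped ComplexOrder

noncomputable section

/-- the standard basis vector e_a of ℂ^d (indexed by a natural number `a`;
it is the zero vector when `a ≥ d`). -/
def eV (d : ℕ) (a : ℕ) : Fin d → ℂ := fun k => if (k : ℕ) = a then 1 else 0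

/-- ω_m = exp(2πi/m) -/
def wN (m : ℕ) : ℂ := Complex.exp (2 * Real.pi * Complex.I / m)

/-- η_i^{(d−2k)} = Σ_{t=k}^{d−2−k} ω_{d−1−2k}^{i(t−k)} e_t -/
def etaG (d k i : ℕ) : Fin d → ℂ :=
  fun a => ∑ t ∈ Finset.Icc k (d - 2 - k), wN (d - 1 - 2 * k) ^ (i * (t - k)) * eV d t a

/-- ξ_j^{(d−2k)} = Σ_{t=k}^{d−2−k} ω_{d−1−2k}^{j(t−k)} e_{t+1} -/
def xiG (d k j : ℕ) : Fin d → ℂ :=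
  fun a => ∑ t ∈ Finset.Icc k (d - 2 - k), wN (d - 1 - 2 * k) ^ (j * (t - k)) * eV d (t + 1) a

/-- the product vector u ⊗ v ⊗ w -/
def tpv (d : ℕ) (u v w : Fin d → ℂ) : Fin d × Fin d × Fin d → ℂ :=
  fun p => u p.1 * v p.2.1 * w p.2.2

/-- the stopper state S_d = (Σ e_i) ⊗ (Σ e_j) ⊗ (Σ e_k) -/
def stopD (d : ℕ) : Fin d × Fin d × Fin d → ℂ :=
  tpv d (fun a => ∑ i ∈ Finset.range d, eV d i a)
    (fun a => ∑ i ∈ Finset.range d, eV d i a)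
    (fun a => ∑ i ∈ Finset.range d, eV d i a)

/-- the set C^{(d,d−2k)}, the union of the six families A₁, A₂, A₃, B₁, B₂, B₃
indexed by (i,j) ∈ ℤ_{d−1−2k} × ℤ_{d−1−2k} \ {(0,0)} -/
def Cset (d k : ℕ) : Set (Fin d × Fin d × Fin d → ℂ) :=
  {x | ∃ i j : ℕ, i < d - 1 - 2 * k ∧ j < d - 1 - 2 * k ∧ ¬(i = 0 ∧ j = 0) ∧
      (x = tpv d (xiG d k j) (eV d k) (etaG d k i) ∨
       x = tpv d (xiG d k j) (etaG d k i) (eV d (d - 1 - k)) ∨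
       x = tpv d (eV d (d - 1 - k)) (xiG d k j) (etaG d k i) ∨
       x = tpv d (etaG d k i) (eV d (d - 1 - k)) (xiG d k j) ∨
       x = tpv d (etaG d k i) (xiG d k j) (eV d k) ∨
       x = tpv d (eV d k) (etaG d k i) (xiG d k j))}

/-- with φ_i = e_{(d−2)/2} + (−1)^i e_{d/2}, the set
A^{(d,0)} = { φ_r ⊗ φ_s ⊗ φ_t : (r,s,t) ≠ (0,0,0) } (for even d) -/
def phiE (d i : ℕ) : Fin d → ℂ :=
  fun a => eV d ((d - 2) / 2) a + (-1 : ℂ) ^ i * eV d (d / 2) a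

def A0set (d : ℕ) : Set (Fin d × Fin d × Fin d → ℂ) :=
  {x | ∃ r s t : ℕ, r < 2 ∧ s < 2 ∧ t < 2 ∧ ¬(r = 0 ∧ s = 0 ∧ t = 0) ∧
      x = tpv d (phiE d r) (phiE d s) (phiE d t)}

/-- U_d^odd = (⋃_{k=0}^{(d−3)/2} C^{(d,d−2k)}) ∪ {S_d} -/
def Uodd (d : ℕ) : Set (Fin d × Fin d × Fin d → ℂ) :=
  {x | ∃ k ≤ (d - 3) / 2, x ∈ Cset d k} ∪ {stopD d}

/-- U_d^even = (⋃_{k=0}^{(d−4)/2} C^{(d,d−2k)}) ∪ A^{(d,0)} ∪ {S_d} -/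
def Ueven (d : ℕ) : Set (Fin d × Fin d × Fin d → ℂ) :=
  {x | ∃ k ≤ (d - 4) / 2, x ∈ Cset d k} ∪ A0set d ∪ {stopD d}

/-- the standard Hermitian inner product on ℂ^(Fin d × Fin d × Fin d) -/
def inpD (d : ℕ) (x y : Fin d × Fin d × Fin d → ℂ) : ℂ :=
  ∑ p, (starRingEnd ℂ) (x p) * y p

/-- Ẽ = I_d ⊗ E acting on ℂ^(Fin d × Fin d × Fin d) -/
def ampBCD (d : ℕ) (E : Matrix (Fin d × Fin d) (Fin d × Fin d) ℂ) :
    Matrix (Fin d × Fin d × Fin d) (Fin d × Fin d × Fin d) ℂ :=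
  fun p q => (if p.1 = q.1 then (1 : ℂ) else 0) * E p.2 q.2

/-!
Write `d = 2n + 1` and read `u, v, w` as functions `f, g, h` on `ℕ`. The family
`C^{(d,d-2k)}` lives on the shell `[k, 2n-k]³ \ [k+1, 2n-k-1]³`, which it cuts into six tiles
such as `[k+1, 2n-k] × {k} × [k, 2n-1-k]`; orthogonality to all nonconstant Fourier modes of a
tile says exactly that `f ⊗ g ⊗ h` is constant on it. Going outwards from the centre `{n}`, a
case analysis on the six tiles of each shell shows that, as long as none of `f, g, h` vanishes
on `[k, 2n-k]`, each of them takes at most one nonzero value there. On the whole cube this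
makes `∑ f`, `∑ g`, `∑ h` nonzero unless `u ⊗ v ⊗ w = 0`, while orthogonality to the stopper
says that their product vanishes.
-/

section Flatness

open Set

variable {K : Type*} [Field K]

def FlatOn {α : Type*} (F : α → K) (S : Set α) : Prop :=
  ∃ c, ∀ x ∈ S, F x = 0 ∨ F x = c

theorem FlatOn.sum_ne_zero [CharZero K] {ι : Type*} {s : Finset ι} {F : ι → K}
    (hF : FlatOn F s) {x : ι} (hx : x ∈ s) (hFx : F x ≠ 0) : ∑ i ∈ s, F i ≠ 0 := by
  classical
  obtain ⟨c, hc⟩ := hF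
  have hcx : F x = c := (hc x hx).resolve_left hFx
  rw [← Finset.sum_filter_ne_zero, Finset.sum_congr rfl fun i hi =>
      (hc i (Finset.mem_filter.1 hi).1).resolve_left (Finset.mem_filter.1 hi).2,
    Finset.sum_const, nsmul_eq_mul]
  exact mul_ne_zero (Nat.cast_ne_zero.2 (Finset.card_ne_zero_of_mem
    (Finset.mem_filter.2 ⟨hx, hFx⟩))) (hcx ▸ hFx)

section FlatOnIcc

variable {F : ℕ → K} {a b : ℕ} {c : K}

theorem flatOn_Icc_of_left (ha : F a = 0 ∨ F a = c)
    (hF : ∀ x ∈ Icc (a + 1) b, F x = 0 ∨ F x = c) : FlatOn F (Icc a b) :=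
  ⟨c, fun x ⟨hx₁, hx₂⟩ => (eq_or_lt_of_le hx₁).elim (· ▸ ha) fun hx => hF x ⟨hx, hx₂⟩⟩

theorem flatOn_Icc_of_right (hb : F b = 0 ∨ F b = c)
    (hF : ∀ x ∈ Icc a (b - 1), F x = 0 ∨ F x = c) : FlatOn F (Icc a b) :=
  ⟨c, fun x ⟨hx₁, hx₂⟩ => (eq_or_lt_of_le hx₂).elim (· ▸ hb) fun hx => hF x ⟨hx₁, by omega⟩⟩

end FlatOnIcc

def TileConst (c : K) (F G : ℕ → K) (R L : Set ℕ) : Prop :=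
  ∃ κ, ∀ x ∈ R, ∀ y ∈ L, c * F x * G y = κ

namespace TileConst

variable {c : K} {F G : ℕ → K} {R L : Set ℕ} {x x' y y' : ℕ}

theorem left_eq (hT : TileConst c F G R L) (hc : c ≠ 0) (hy : y ∈ L) (hGy : G y ≠ 0)
    (hx : x ∈ R) (hx' : x' ∈ R) : F x = F x' := by
  obtain ⟨κ, hκ⟩ := hT
  exact mul_left_cancel₀ hc (mul_right_cancel₀ hGy ((hκ x hx y hy).trans (hκ x' hx' y hy).symm))

theorem right_eq (hT : TileConst c F G R L) (hc : c ≠ 0) (hx : x ∈ R) (hFx : F x ≠ 0)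
    (hy : y ∈ L) (hy' : y' ∈ L) : G y = G y' := by
  obtain ⟨κ, hκ⟩ := hT
  exact mul_left_cancel₀ (mul_ne_zero hc hFx) ((hκ x hx y hy).trans (hκ x hx y' hy').symm)

end TileConst

/-- `f ⊗ g ⊗ h` is constant on each of the six tiles into which the families `A₁, …, B₃` of
`C^{(d,d-2k)}` (with `a = k`, `b = d - 1 - k`) cut the shell `[a,b]³ \ [a+1,b-1]³`; for
instance `A₁` is the tile `[a+1, b] × {a} × [a, b-1]`. -/
structure ShellConst (a b : ℕ) (f g h : ℕ → K) : Prop where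
  A₁ : TileConst (g a) f h (Icc (a + 1) b) (Icc a (b - 1))
  A₂ : TileConst (h b) f g (Icc (a + 1) b) (Icc a (b - 1))
  A₃ : TileConst (f b) g h (Icc (a + 1) b) (Icc a (b - 1))
  B₁ : TileConst (g b) h f (Icc (a + 1) b) (Icc a (b - 1))
  B₂ : TileConst (h a) g f (Icc (a + 1) b) (Icc a (b - 1))
  B₃ : TileConst (f a) h g (Icc (a + 1) b) (Icc a (b - 1))

def TripleFlatOn (S : Set ℕ) (f g h : ℕ → K) : Prop :=
  (∃ x ∈ S, f x ≠ 0) → (∃ x ∈ S, g x ≠ 0) → (∃ x ∈ S, h x ≠ 0) →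
    FlatOn f S ∧ FlatOn g S ∧ FlatOn h S

namespace ShellConst

variable {a b : ℕ} {f g h : ℕ → K}

theorem rotate (hS : ShellConst a b f g h) : ShellConst a b g h f :=
  ⟨hS.B₂, hS.A₃, hS.B₁, hS.A₂, hS.B₃, hS.A₁⟩

theorem flatOn_of_inner (hS : ShellConst a b f g h) (hfM : FlatOn f (Icc (a + 1) (b - 1)))
    (hf : ∃ x ∈ Icc (a + 1) (b - 1), f x ≠ 0) (hg : ∃ x ∈ Icc (a + 1) (b - 1), g x ≠ 0)
    (hh : ∃ x ∈ Icc (a + 1) (b - 1), h x ≠ 0) : FlatOn f (Icc a b) := by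
  obtain ⟨α, hα⟩ := hfM
  obtain ⟨p, ⟨hp₁, hp₂⟩, hfp⟩ := hf
  obtain ⟨q, ⟨hq₁, hq₂⟩, hgq⟩ := hg
  obtain ⟨r, ⟨hr₁, hr₂⟩, hhr⟩ := hh
  have hpα : f p = α := (hα p ⟨hp₁, hp₂⟩).resolve_left hfp
  refine ⟨α, fun x ⟨hx₁, hx₂⟩ => ?_⟩
  rw [← hpα]
  by_contra! hfx
  obtain ⟨hfx₀, hfxp⟩ := hfx
  rcases (show x = a ∨ x = b ∨ x ∈ Icc (a + 1) (b - 1) by grind) with rfl | rfl | hxM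
  · have hha : h x = 0 := by
      by_contra hha
      exact hfxp (hS.B₂.right_eq hha ⟨hq₁, by omega⟩ hgq ⟨le_rfl, by omega⟩ ⟨by omega, hp₂⟩)
    have hga : g x = g q :=
      hS.B₃.right_eq hfx₀ ⟨hr₁, by omega⟩ hhr ⟨le_rfl, by omega⟩ ⟨by omega, hq₂⟩
    have := hS.A₁.right_eq (hga ▸ hgq) ⟨hp₁, by omega⟩ hfp ⟨by omega, hr₂⟩ ⟨le_rfl, by omega⟩
    exact hhr (this.trans hha)
  · have hhb : h x = 0 := by
      by_contra hhb
      exact hfxp (hS.A₂.left_eq hhb ⟨by omega, hq₂⟩ hgq ⟨by omega, le_rfl⟩ ⟨hp₁, by omega⟩)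
    have hgb : g x = g q :=
      hS.A₃.left_eq hfx₀ ⟨by omega, hr₂⟩ hhr ⟨by omega, le_rfl⟩ ⟨hq₁, by omega⟩
    have := hS.B₁.left_eq (hgb ▸ hgq) ⟨by omega, hp₂⟩ hfp ⟨hr₁, by omega⟩ ⟨by omega, le_rfl⟩
    exact hhr (this.trans hhb)
  · exact hfxp ((hα x hxM).resolve_left hfx₀ |>.trans hpα.symm)

theorem endpoint_eq_zero_of_inner_eq_zero (hS : ShellConst a b f g h) (hab : a + 2 ≤ b)
    (hfM : ∀ x ∈ Icc (a + 1) (b - 1), f x = 0) (hg : ∃ x ∈ Icc a b, g x ≠ 0)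
    (hh : ∃ x ∈ Icc a b, h x ≠ 0) : f a = 0 ∨ f b = 0 := by
  by_contra! hf
  obtain ⟨hfa, hfb⟩ := hf
  have hfm : f (a + 1) = 0 := hfM _ ⟨le_rfl, by omega⟩
  have hfR : f b ≠ f (a + 1) := hfm ▸ hfb
  have hfL : f a ≠ f (a + 1) := hfm ▸ hfa
  obtain ⟨y, ⟨hy₁, hy₂⟩, hhy⟩ := hh
  obtain ⟨x, ⟨hx₁, hx₂⟩, hgx⟩ := hg
  have hgR : ∃ x ∈ Icc (a + 1) b, g x ≠ 0 := by
    rcases eq_or_lt_of_le hx₁ with rfl | hx₁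
    · rcases eq_or_lt_of_le hy₂ with rfl | hy₂
      · exact (hfR (hS.A₂.left_eq hhy ⟨le_rfl, by omega⟩ hgx ⟨by omega, le_rfl⟩
          ⟨le_rfl, by omega⟩)).elim
      · exact (hfR (hS.A₁.left_eq hgx ⟨hy₁, by omega⟩ hhy ⟨by omega, le_rfl⟩
          ⟨le_rfl, by omega⟩)).elim
    · exact ⟨x, ⟨hx₁, hx₂⟩, hgx⟩
  have hgL : ∃ x ∈ Icc a (b - 1), g x ≠ 0 := by
    rcases eq_or_lt_of_le hx₂ with rfl | hx₂
    · rcases eq_or_lt_of_le hy₁ with rfl | hy₁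
      · exact (hfL (hS.B₂.right_eq hhy ⟨by omega, le_rfl⟩ hgx ⟨le_rfl, by omega⟩
          ⟨by omega, by omega⟩)).elim
      · exact (hfL (hS.B₁.right_eq hgx ⟨hy₁, hy₂⟩ hhy ⟨le_rfl, by omega⟩
          ⟨by omega, by omega⟩)).elim
    · exact ⟨x, ⟨hx₁, by omega⟩, hgx⟩
  obtain ⟨p, hpR, hgp⟩ := hgR
  obtain ⟨q, hqL, hgq⟩ := hgL
  have hha : h a = 0 := by
    by_contra hha
    exact hfL (hS.B₂.right_eq hha hpR hgp ⟨le_rfl, by omega⟩ ⟨by omega, by omega⟩)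
  have hhb : h b = 0 := by
    by_contra hhb
    exact hfR (hS.A₂.left_eq hhb hqL hgq ⟨by omega, le_rfl⟩ ⟨le_rfl, by omega⟩)
  have hya : a < y := lt_of_le_of_ne hy₁ fun hay => hhy (hay ▸ hha)
  exact hhy ((hS.B₃.left_eq hfa hqL hgq ⟨hya, hy₂⟩ ⟨by omega, le_rfl⟩).trans hhb)

theorem flatOn_of_eq_zero_off_left (hS : ShellConst a b f g h) (hab : a + 2 ≤ b)
    (hfR : ∀ x ∈ Icc (a + 1) b, f x = 0) (hfa : f a ≠ 0) (hg : ∃ x ∈ Icc a b, g x ≠ 0)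
    (hh : ∃ x ∈ Icc a b, h x ≠ 0) : FlatOn g (Icc a b) ∧ FlatOn h (Icc a b) := by
  have hfL : f a ≠ f (a + 1) := (hfR _ ⟨le_rfl, by omega⟩).symm ▸ hfa
  have hB₁ : g b ≠ 0 → ∀ y ∈ Icc (a + 1) b, h y = 0 := fun hgb y hy => by
    by_contra hhy
    exact hfL (hS.B₁.right_eq hgb hy hhy ⟨le_rfl, by omega⟩ ⟨by omega, by omega⟩)
  have hB₂ : h a ≠ 0 → ∀ x ∈ Icc (a + 1) b, g x = 0 := fun hha x hx => by
    by_contra hgx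
    exact hfL (hS.B₂.right_eq hha hx hgx ⟨le_rfl, by omega⟩ ⟨by omega, by omega⟩)
  by_cases hhR : ∀ y ∈ Icc (a + 1) b, h y = 0
  · have hha : h a ≠ 0 := by
      obtain ⟨y, ⟨hy₁, hy₂⟩, hhy⟩ := hh
      rcases eq_or_lt_of_le hy₁ with rfl | hy₁
      · exact hhy
      · exact (hhy (hhR y ⟨hy₁, hy₂⟩)).elim
    exact ⟨flatOn_Icc_of_left (Or.inr rfl) fun x hx => Or.inl (hB₂ hha x hx),
      flatOn_Icc_of_left (Or.inr rfl) fun x hx => Or.inl (hhR x hx)⟩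
  push Not at hhR
  obtain ⟨y, hyR, hhy⟩ := hhR
  have hgb : g b = 0 := by
    by_contra hgb
    exact hhy (hB₁ hgb y hyR)
  obtain ⟨z, ⟨hz₁, hz₂⟩, hgz⟩ := hg
  have hzL : z ∈ Icc a (b - 1) := ⟨hz₁, by
    rcases eq_or_lt_of_le hz₂ with rfl | hz₂
    · exact (hgz hgb).elim
    · omega⟩
  have hgL : ∀ x ∈ Icc a (b - 1), g x = g z := fun x hx =>
    hS.B₃.right_eq hfa hyR hhy hx hzL
  have hhR : ∀ x ∈ Icc (a + 1) b, h x = h y := fun x hx =>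
    hS.B₃.left_eq hfa hzL hgz hx hyR
  have hha : h a = 0 := by
    by_contra hha
    exact hgz ((hgL (a + 1) ⟨by omega, by omega⟩).symm.trans
      (hB₂ hha _ ⟨le_rfl, by omega⟩))
  exact ⟨flatOn_Icc_of_right (Or.inl hgb) fun x hx => Or.inr (hgL x hx),
    flatOn_Icc_of_left (Or.inl hha) fun x hx => Or.inr (hhR x hx)⟩

theorem flatOn_of_eq_zero_off_right (hS : ShellConst a b f g h) (hab : a + 2 ≤ b)
    (hfL : ∀ x ∈ Icc a (b - 1), f x = 0) (hfb : f b ≠ 0) (hg : ∃ x ∈ Icc a b, g x ≠ 0)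
    (hh : ∃ x ∈ Icc a b, h x ≠ 0) : FlatOn g (Icc a b) ∧ FlatOn h (Icc a b) := by
  have hfR : f b ≠ f (a + 1) := (hfL (a + 1) ⟨by omega, by omega⟩).symm ▸ hfb
  have hA₁ : g a ≠ 0 → ∀ y ∈ Icc a (b - 1), h y = 0 := fun hga y hy => by
    by_contra hhy
    exact hfR (hS.A₁.left_eq hga hy hhy ⟨by omega, le_rfl⟩ ⟨le_rfl, by omega⟩)
  have hA₂ : h b ≠ 0 → ∀ x ∈ Icc a (b - 1), g x = 0 := fun hhb x hx => by
    by_contra hgx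
    exact hfR (hS.A₂.left_eq hhb hx hgx ⟨by omega, le_rfl⟩ ⟨le_rfl, by omega⟩)
  by_cases hhL : ∀ y ∈ Icc a (b - 1), h y = 0
  · have hhb : h b ≠ 0 := by
      obtain ⟨y, ⟨hy₁, hy₂⟩, hhy⟩ := hh
      rcases eq_or_lt_of_le hy₂ with rfl | hy₂
      · exact hhy
      · exact (hhy (hhL y ⟨hy₁, by omega⟩)).elim
    exact ⟨flatOn_Icc_of_right (Or.inr rfl) fun x hx => Or.inl (hA₂ hhb x hx),
      flatOn_Icc_of_right (Or.inr rfl) fun x hx => Or.inl (hhL x hx)⟩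
  push Not at hhL
  obtain ⟨y, hyL, hhy⟩ := hhL
  have hga : g a = 0 := by
    by_contra hga
    exact hhy (hA₁ hga y hyL)
  obtain ⟨z, ⟨hz₁, hz₂⟩, hgz⟩ := hg
  have hzR : z ∈ Icc (a + 1) b := ⟨by
    rcases eq_or_lt_of_le hz₁ with rfl | hz₁
    · exact (hgz hga).elim
    · omega, hz₂⟩
  have hgR : ∀ x ∈ Icc (a + 1) b, g x = g z := fun x hx =>
    hS.A₃.left_eq hfb hyL hhy hx hzR
  have hhL : ∀ x ∈ Icc a (b - 1), h x = h y := fun x hx =>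
    hS.A₃.right_eq hfb hzR hgz hx hyL
  have hhb : h b = 0 := by
    by_contra hhb
    exact hgz ((hgR (b - 1) ⟨by omega, by omega⟩).symm.trans
      (hA₂ hhb _ ⟨by omega, by omega⟩))
  exact ⟨flatOn_Icc_of_left (Or.inl hga) fun x hx => Or.inr (hgR x hx),
    flatOn_Icc_of_right (Or.inl hhb) fun x hx => Or.inr (hhL x hx)⟩

theorem flatOn_of_inner_eq_zero (hS : ShellConst a b f g h) (hab : a + 2 ≤ b)
    (hfM : ∀ x ∈ Icc (a + 1) (b - 1), f x = 0) (hf : ∃ x ∈ Icc a b, f x ≠ 0)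
    (hg : ∃ x ∈ Icc a b, g x ≠ 0) (hh : ∃ x ∈ Icc a b, h x ≠ 0) :
    FlatOn f (Icc a b) ∧ FlatOn g (Icc a b) ∧ FlatOn h (Icc a b) := by
  obtain ⟨z, ⟨hz₁, hz₂⟩, hfz⟩ := hf
  rcases hS.endpoint_eq_zero_of_inner_eq_zero hab hfM hg hh with hfa | hfb
  · have hfL : ∀ x ∈ Icc a (b - 1), f x = 0 := fun x ⟨hx₁, hx₂⟩ =>
      (eq_or_lt_of_le hx₁).elim (· ▸ hfa) fun hx => hfM x ⟨hx, hx₂⟩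
    have hfb : f b ≠ 0 := by
      rcases eq_or_lt_of_le hz₂ with rfl | hz₂
      · exact hfz
      · exact (hfz (hfL z ⟨hz₁, by omega⟩)).elim
    exact ⟨flatOn_Icc_of_right (Or.inr rfl) fun x hx => Or.inl (hfL x hx),
      hS.flatOn_of_eq_zero_off_right hab hfL hfb hg hh⟩
  · have hfR : ∀ x ∈ Icc (a + 1) b, f x = 0 := fun x ⟨hx₁, hx₂⟩ =>
      (eq_or_lt_of_le hx₂).elim (·.symm ▸ hfb) fun hx => hfM x ⟨hx₁, by omega⟩
    have hfa : f a ≠ 0 := by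
      rcases eq_or_lt_of_le hz₁ with rfl | hz₁
      · exact hfz
      · exact (hfz (hfR z ⟨hz₁, hz₂⟩)).elim
    exact ⟨flatOn_Icc_of_left (Or.inr rfl) fun x hx => Or.inl (hfR x hx),
      hS.flatOn_of_eq_zero_off_left hab hfR hfa hg hh⟩

theorem tripleFlatOn_Icc_of_inner (hS : ShellConst a b f g h) (hab : a + 2 ≤ b)
    (hM : TripleFlatOn (Icc (a + 1) (b - 1)) f g h) : TripleFlatOn (Icc a b) f g h := by
  intro hf hg hh
  by_cases hfM : ∃ x ∈ Icc (a + 1) (b - 1), f x ≠ 0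
  swap
  · push Not at hfM
    exact hS.flatOn_of_inner_eq_zero hab hfM hf hg hh
  by_cases hgM : ∃ x ∈ Icc (a + 1) (b - 1), g x ≠ 0
  swap
  · push Not at hgM
    obtain ⟨Fg, Fh, Ff⟩ := hS.rotate.flatOn_of_inner_eq_zero hab hgM hg hh hf
    exact ⟨Ff, Fg, Fh⟩
  by_cases hhM : ∃ x ∈ Icc (a + 1) (b - 1), h x ≠ 0
  swap
  · push Not at hhM
    obtain ⟨Fh, Ff, Fg⟩ := hS.rotate.rotate.flatOn_of_inner_eq_zero hab hhM hh hf hg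
    exact ⟨Ff, Fg, Fh⟩
  obtain ⟨Ff, Fg, Fh⟩ := hM hfM hgM hhM
  exact ⟨hS.flatOn_of_inner Ff hfM hgM hhM, hS.rotate.flatOn_of_inner Fg hgM hhM hfM,
    hS.rotate.rotate.flatOn_of_inner Fh hhM hfM hgM⟩

end ShellConst

theorem tripleFlatOn_of_shellConst {n : ℕ} {f g h : ℕ → K}
    (hS : ∀ k < n, ShellConst k (2 * n - k) f g h) : TripleFlatOn (Icc 0 (2 * n)) f g h := by
  have key : ∀ r ≤ n, TripleFlatOn (Icc (n - r) (n + r)) f g h := by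
    intro r
    induction r with
    | zero =>
      have hflat (F : ℕ → K) : FlatOn F (Icc (n - 0) (n + 0)) :=
        flatOn_Icc_of_left (Or.inr rfl) fun x ⟨hx₁, hx₂⟩ => absurd (hx₁.trans hx₂) (by omega)
      exact fun _ _ _ _ => ⟨hflat f, hflat g, hflat h⟩
    | succ r ih =>
      intro hr
      have hstep := (hS (n - (r + 1)) (by omega)).tripleFlatOn_Icc_of_inner (by omega)
      rw [show 2 * n - (n - (r + 1)) = n + (r + 1) by omega,
        show n - (r + 1) + 1 = n - r by omega, show n + (r + 1) - 1 = n + r by omega] at hstep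
      exact hstep (ih (by omega))
  simpa [two_mul] using key n le_rfl

end Flatness

section Fourier

open Finset

variable {K : Type*} [Field K] {ζ : K} {m : ℕ}

theorem IsPrimitiveRoot.sum_pow_mul_inv_pow (hζ : IsPrimitiveRoot ζ m) {s t : ℕ} (hs : s < m)
    (ht : t < m) :
    ∑ j ∈ range m, ζ ^ (j * t) * ζ⁻¹ ^ (j * s) = if t = s then (m : K) else 0 := by
  have hζ0 : ζ ≠ 0 := hζ.ne_zero (by omega)
  set x := ζ ^ t * ζ⁻¹ ^ s
  have hterm : ∀ j, ζ ^ (j * t) * ζ⁻¹ ^ (j * s) = x ^ j := fun j => by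
    rw [mul_pow, ← pow_mul, ← pow_mul, mul_comm t, mul_comm s]
  simp only [hterm]
  split_ifs with hts
  · simp [x, hts, hζ0]
  · have hx1 : ζ ^ t * ζ⁻¹ ^ s ≠ 1 := by
      rw [Ne, inv_pow, mul_inv_eq_one₀ (pow_ne_zero _ hζ0)]
      exact fun h => hts (hζ.pow_inj ht hs h)
    have hxm : x ^ m = 1 := by
      rw [mul_pow, ← pow_mul, ← pow_mul, mul_comm t, mul_comm s, pow_mul, pow_mul,
        hζ.pow_eq_one, hζ.inv.pow_eq_one, one_pow, one_pow, one_mul]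
    have := geom_sum_mul x m
    rw [hxm, sub_self] at this
    exact (mul_eq_zero.mp this).resolve_right (sub_ne_zero.mpr hx1)

theorem IsPrimitiveRoot.dft_inversion (hζ : IsPrimitiveRoot ζ m) (p : ℕ → K) {s : ℕ}
    (hs : s < m) :
    ∑ j ∈ range m, ζ⁻¹ ^ (j * s) * ∑ t ∈ range m, ζ ^ (j * t) * p t = m * p s := by
  simp_rw [mul_sum]
  rw [sum_comm]
  have hinner : ∀ t ∈ range m, ∑ j ∈ range m, ζ⁻¹ ^ (j * s) * (ζ ^ (j * t) * p t)
      = (if t = s then (m : K) else 0) * p t := fun t ht => by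
    rw [← hζ.sum_pow_mul_inv_pow hs (mem_range.1 ht), sum_mul]
    exact sum_congr rfl fun j _ => by ring
  rw [sum_congr rfl hinner]
  simp [hs]

theorem IsPrimitiveRoot.exists_mul_mul_eq_of_dft_eq_zero (hζ : IsPrimitiveRoot ζ m) (c : K)
    (p q : ℕ → K)
    (H : ∀ i < m, ∀ j < m, ¬(i = 0 ∧ j = 0) →
      c * (∑ s ∈ range m, ζ ^ (j * s) * p s) * (∑ t ∈ range m, ζ ^ (i * t) * q t) = 0) :
    ∃ κ, ∀ s < m, ∀ t < m, c * p s * q t = κ := by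
  rcases Nat.eq_zero_or_pos m with rfl | hm
  · exact ⟨0, by simp⟩
  have : NeZero m := ⟨hm.ne'⟩
  have hm0 : (m : K) ≠ 0 := hζ.neZero'.out
  set P := fun j => ∑ s ∈ range m, ζ ^ (j * s) * p s
  set Q := fun i => ∑ t ∈ range m, ζ ^ (i * t) * q t
  refine ⟨c * P 0 * Q 0 / m ^ 2, fun s hs t ht => ?_⟩
  rw [eq_div_iff (pow_ne_zero 2 hm0)]
  calc c * p s * q t * m ^ 2 = c * (m * p s) * (m * q t) := by ring
    _ = ∑ j ∈ range m, ∑ i ∈ range m, ζ⁻¹ ^ (j * s) * ζ⁻¹ ^ (i * t) * (c * P j * Q i) := by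
      rw [← hζ.dft_inversion p hs, ← hζ.dft_inversion q ht, mul_assoc, sum_mul_sum, mul_sum]
      refine sum_congr rfl fun j _ => ?_
      rw [mul_sum]
      exact sum_congr rfl fun i _ => by ring
    _ = c * P 0 * Q 0 := by
      rw [← sum_product', sum_eq_single_of_mem (0, 0) (by simp [hm])]
      · simp
      · rintro ⟨j, i⟩ hji hne
        rw [mem_product, mem_range, mem_range] at hji
        rw [H i hji.2 j hji.1 (by grind), mul_zero]

theorem IsPrimitiveRoot.tileConst_of_dft_eq_zero (hζ : IsPrimitiveRoot ζ m) {a : ℕ} {c : K}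
    {F G : ℕ → K}
    (H : ∀ i < m, ∀ j < m, ¬(i = 0 ∧ j = 0) →
      c * (∑ s ∈ range m, ζ ^ (j * s) * F (a + s + 1)) *
        (∑ s ∈ range m, ζ ^ (i * s) * G (a + s)) = 0) :
    TileConst c F G (Set.Icc (a + 1) (a + m)) (Set.Icc a (a + m - 1)) := by
  obtain ⟨κ, hκ⟩ := hζ.exists_mul_mul_eq_of_dft_eq_zero c _ _ H
  refine ⟨κ, fun x ⟨hx₁, hx₂⟩ y ⟨hy₁, hy₂⟩ => ?_⟩
  have := hκ (x - a - 1) (by omega) (y - a) (by omega)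
  rwa [show a + (x - a - 1) + 1 = x by omega, show a + (y - a) = y by omega] at this

end Fourier

section Coordinates

open Finset Function ComplexConjugate

theorem star_eV_dotProduct (d t : ℕ) (u : Fin d → ℂ) :
    star (eV d t) ⬝ᵥ u = extend Fin.val u 0 t := by
  by_cases ht : t < d
  · rw [show t = (⟨t, ht⟩ : Fin d).val from rfl, Fin.val_injective.extend_apply, dotProduct,
      sum_eq_single ⟨t, ht⟩]
    · simp [eV]
    · intro x _ hx
      simp [eV, Fin.ext_iff.not.mp hx]
    · simp
  · rw [extend_apply' _ _ _ fun ⟨x, hx⟩ => ht (hx ▸ x.isLt)]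
    refine sum_eq_zero fun x _ => ?_
    simp [eV, show (x : ℕ) ≠ t by omega]

theorem star_sum_mul_eV_dotProduct (d : ℕ) (T : Finset ℕ) (c : ℕ → ℂ) (φ : ℕ → ℕ)
    (u : Fin d → ℂ) :
    star (fun x => ∑ t ∈ T, c t * eV d (φ t) x) ⬝ᵥ u
      = ∑ t ∈ T, conj (c t) * extend Fin.val u 0 (φ t) := by
  simp only [← star_eV_dotProduct, dotProduct, Pi.star_apply, star_sum, star_mul', sum_mul,
    mul_sum]
  rw [sum_comm]
  exact sum_congr rfl fun t _ => sum_congr rfl fun x _ => by rw [Complex.star_def]; ring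

theorem sum_Icc_eq_sum_range {M : Type*} [AddCommMonoid M] (F : ℕ → M) (k l : ℕ) :
    ∑ t ∈ Icc k l, F t = ∑ s ∈ range (l + 1 - k), F (k + s) := by
  rw [← Ico_add_one_right_eq_Icc, sum_Ico_eq_sum_range]

theorem star_etaG_dotProduct {d k : ℕ} (i : ℕ) (hk : 2 * k + 2 ≤ d) (u : Fin d → ℂ) :
    star (etaG d k i) ⬝ᵥ u = ∑ s ∈ range (d - 1 - 2 * k),
      conj (wN (d - 1 - 2 * k)) ^ (i * s) * extend Fin.val u 0 (k + s) := by
  refine (star_sum_mul_eV_dotProduct d _ _ (fun t => t) u).trans ?_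
  rw [sum_Icc_eq_sum_range, show d - 2 - k + 1 - k = d - 1 - 2 * k by omega]
  simp

theorem star_xiG_dotProduct {d k : ℕ} (j : ℕ) (hk : 2 * k + 2 ≤ d) (u : Fin d → ℂ) :
    star (xiG d k j) ⬝ᵥ u = ∑ s ∈ range (d - 1 - 2 * k),
      conj (wN (d - 1 - 2 * k)) ^ (j * s) * extend Fin.val u 0 (k + s + 1) := by
  refine (star_sum_mul_eV_dotProduct d _ _ (· + 1) u).trans ?_
  rw [sum_Icc_eq_sum_range, show d - 2 - k + 1 - k = d - 1 - 2 * k by omega]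
  simp

theorem star_sum_eV_dotProduct (d : ℕ) (u : Fin d → ℂ) :
    star (fun x => ∑ i ∈ range d, eV d i x) ⬝ᵥ u = ∑ x, u x := by
  refine sum_congr rfl fun x _ => ?_
  simp [eV]

theorem inpD_tpv (d : ℕ) (a b c u v w : Fin d → ℂ) :
    inpD d (tpv d a b c) (tpv d u v w) = (star a ⬝ᵥ u) * (star b ⬝ᵥ v) * (star c ⬝ᵥ w) := by
  rw [inpD, Fintype.sum_prod_type, dotProduct, dotProduct, dotProduct, sum_mul_sum,
    sum_mul_sum]
  refine sum_congr rfl fun x _ => ?_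
  simp only [Fintype.sum_prod_type, sum_mul]
  rw [sum_comm]
  refine sum_congr rfl fun y _ => sum_congr rfl fun z _ => ?_
  simp only [tpv, Pi.star_apply, map_mul, Complex.star_def]
  ring

theorem exists_extend_ne_zero {n : ℕ} {u : Fin (n + 1) → ℂ} {x : Fin (n + 1)} (hx : u x ≠ 0) :
    ∃ t ∈ Set.Icc 0 n, extend Fin.val u 0 t ≠ 0 :=
  ⟨x, ⟨x.val.zero_le, by omega⟩, by rwa [Fin.val_injective.extend_apply]⟩

theorem FlatOn.sum_ne_zero_of_extend {n : ℕ} {u : Fin (n + 1) → ℂ}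
    (hu : FlatOn (extend Fin.val u 0) (Set.Icc 0 n)) {x : Fin (n + 1)} (hx : u x ≠ 0) :
    ∑ i, u i ≠ 0 := by
  obtain ⟨c, hc⟩ := hu
  refine FlatOn.sum_ne_zero ⟨c, fun i _ => ?_⟩ (mem_univ x) hx
  rw [← Fin.val_injective.extend_apply u 0 i]
  exact hc i ⟨i.val.zero_le, by omega⟩

theorem shellConst_of_orthogonal {d k : ℕ} (hk : 2 * k + 2 ≤ d) {u v w : Fin d → ℂ}
    (h : ∀ x ∈ Cset d k, inpD d x (tpv d u v w) = 0) :
    ShellConst k (d - 1 - k)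
      (extend Fin.val u 0) (extend Fin.val v 0) (extend Fin.val w 0) := by
  set m := d - 1 - 2 * k
  set ζ := conj (wN m)
  have hζ : IsPrimitiveRoot ζ m :=
    (Complex.isPrimitiveRoot_exp _ (by omega)).map_of_injective (starRingEnd ℂ).injective
  have tile {c : ℂ} {F G : ℕ → ℂ} (H : ∀ i < m, ∀ j < m, ¬(i = 0 ∧ j = 0) →
      c * (∑ s ∈ range m, ζ ^ (j * s) * F (k + s + 1)) * (∑ s ∈ range m, ζ ^ (i * s) * G (k + s))
        = 0) :
      TileConst c F G (Set.Icc (k + 1) (d - 1 - k)) (Set.Icc k (d - 1 - k - 1)) := by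
    have := hζ.tileConst_of_dft_eq_zero H
    rwa [show k + m = d - 1 - k by omega] at this
  refine ⟨tile fun i hi j hj hij => ?_, tile fun i hi j hj hij => ?_,
    tile fun i hi j hj hij => ?_, tile fun i hi j hj hij => ?_,
    tile fun i hi j hj hij => ?_, tile fun i hi j hj hij => ?_⟩
  · have := h _ ⟨i, j, hi, hj, hij, Or.inl rfl⟩
    rw [inpD_tpv, star_xiG_dotProduct j hk, star_eV_dotProduct, star_etaG_dotProduct i hk] at this
    linear_combination this
  · have := h _ ⟨i, j, hi, hj, hij, Or.inr (Or.inl rfl)⟩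
    rw [inpD_tpv, star_xiG_dotProduct j hk, star_etaG_dotProduct i hk, star_eV_dotProduct] at this
    linear_combination this
  · have := h _ ⟨i, j, hi, hj, hij, Or.inr (Or.inr (Or.inl rfl))⟩
    rw [inpD_tpv, star_eV_dotProduct, star_xiG_dotProduct j hk, star_etaG_dotProduct i hk] at this
    linear_combination this
  · have := h _ ⟨i, j, hi, hj, hij, Or.inr (Or.inr (Or.inr (Or.inl rfl)))⟩
    rw [inpD_tpv, star_etaG_dotProduct i hk, star_eV_dotProduct, star_xiG_dotProduct j hk] at this
    linear_combination this
  · have := h _ ⟨i, j, hi, hj, hij, Or.inr (Or.inr (Or.inr (Or.inr (Or.inl rfl))))⟩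
    rw [inpD_tpv, star_etaG_dotProduct i hk, star_xiG_dotProduct j hk, star_eV_dotProduct] at this
    linear_combination this
  · have := h _ ⟨i, j, hi, hj, hij, Or.inr (Or.inr (Or.inr (Or.inr (Or.inr rfl))))⟩
    rw [inpD_tpv, star_eV_dotProduct, star_etaG_dotProduct i hk, star_xiG_dotProduct j hk] at this
    linear_combination this

theorem Uodd_unextendible_general (d : ℕ) (hodd : Odd d)
    (u v w : Fin d → ℂ)
    (h : ∀ x ∈ Uodd d, inpD d x (tpv d u v w) = 0) :
    tpv d u v w = 0 := by
  obtain ⟨n, rfl⟩ := hodd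
  have hshell (k : ℕ) (hk : k < n) : ShellConst k (2 * n - k)
      (extend Fin.val u 0) (extend Fin.val v 0) (extend Fin.val w 0) := by
    have := shellConst_of_orthogonal (by omega) fun x hx => h x (Or.inl ⟨k, by omega, hx⟩)
    rwa [show 2 * n + 1 - 1 - k = 2 * n - k by omega] at this
  have hstop : (∑ x, u x) * (∑ x, v x) * (∑ x, w x) = 0 := by
    simpa only [stopD, inpD_tpv, star_sum_eV_dotProduct] using h _ (Or.inr rfl)
  by_contra hne
  obtain ⟨⟨x, y, z⟩, hxyz⟩ := Function.ne_iff.mp hne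
  simp only [tpv, Pi.zero_apply, mul_ne_zero_iff] at hxyz
  obtain ⟨⟨hu, hv⟩, hw⟩ := hxyz
  obtain ⟨Fu, Fv, Fw⟩ := tripleFlatOn_of_shellConst hshell
    (exists_extend_ne_zero hu) (exists_extend_ne_zero hv) (exists_extend_ne_zero hw)
  exact mul_ne_zero (mul_ne_zero (Fu.sum_ne_zero_of_extend hu) (Fv.sum_ne_zero_of_extend hv))
    (Fw.sum_ne_zero_of_extend hw) hstop

/-- For every odd d ≥ 3, U_d^odd is an unextendible product basis: any product
vector orthogonal to every member of U_d^odd is zero. -/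
theorem Uodd_unextendible (d : ℕ) (hd : 3 ≤ d) (hodd : Odd d)
    (u v w : Fin d → ℂ)
    (h : ∀ x ∈ Uodd d, inpD d x (tpv d u v w) = 0) :
    tpv d u v w = 0 :=
  Uodd_unextendible_general d hodd u v w h
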